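/- There exists an absolute constant C > 0 such that for every n ∈ S and every x ∈ 𝕋² with r_n(x)² ≠ 1, all entries of the 2×2 matrices X(x) and Y(x) are bounded in absolute value by C. -/

import Mathlib

open scoped Real

noncomputable section

/-- The set of integers expressible as a sum of two squares. -/
def S : Set ℤ := {n | ∃ a b : ℤ, n = a ^ 2 + b ^ 2}

/-- The set of lattice points on the circle of radius `√n`. -/
def En (n : ℤ) : Set (ℤ × ℤ) := {l | l.1 ^ 2 + l.2 ^ 2 = n}

/-- The number of lattice points on the circle of radius `√n`. -/
def Nn (n : ℤ) : ℕ := (En n).ncard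

/-- Euclidean norm of a lattice point. -/
def latNorm (v : ℤ × ℤ) : ℝ := Real.sqrt ((v.1 : ℝ) ^ 2 + (v.2 : ℝ) ^ 2)

/-- The set of length-`l` spectral quasi-correlations. -/
def Cn (n : ℤ) (l : ℕ) (K : ℝ) : Set (Fin l → ℤ × ℤ) :=
  {lam | (∀ i, lam i ∈ En n) ∧ 0 < latNorm (∑ i, lam i) ∧ latNorm (∑ i, lam i) ≤ K}

/-- The covariance function `r_n(x) = (1/N_n) ∑_{λ ∈ E_n} cos(2π⟨λ,x⟩)`, viewed as a
`ℤ²`-periodic function on `ℝ²` (for `s ≤ 1/2` the centred toral ball is identified with the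
Euclidean one). -/
def rn (n : ℤ) (x : EuclideanSpace ℝ (Fin 2)) : ℝ :=
  (Nn n : ℝ)⁻¹ * ∑ᶠ lam ∈ En n, Real.cos (2 * π * ((lam.1 : ℝ) * x 0 + (lam.2 : ℝ) * x 1))

/-- The gradient `D(x) = ∇r_n(x)` of `r_n`, given by the lattice sum
`D_i(x) = -(2π/N_n) ∑_{λ ∈ E_n} sin(2π⟨λ,x⟩) λ_i`. -/
def Dn (n : ℤ) (x : EuclideanSpace ℝ (Fin 2)) (i : Fin 2) : ℝ :=
  -(2 * π) * (Nn n : ℝ)⁻¹ * ∑ᶠ lam ∈ En n,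
    Real.sin (2 * π * ((lam.1 : ℝ) * x 0 + (lam.2 : ℝ) * x 1)) * ![(lam.1 : ℝ), (lam.2 : ℝ)] i

/-- The Hessian `H(x)` of `r_n`, given by the lattice sum
`H_{ij}(x) = -(4π²/N_n) ∑_{λ ∈ E_n} cos(2π⟨λ,x⟩) λ_i λ_j`. -/
def Hn (n : ℤ) (x : EuclideanSpace ℝ (Fin 2)) : Matrix (Fin 2) (Fin 2) ℝ :=
  Matrix.of fun i j => -(4 * π ^ 2) * (Nn n : ℝ)⁻¹ * ∑ᶠ lam ∈ En n,
    Real.cos (2 * π * ((lam.1 : ℝ) * x 0 + (lam.2 : ℝ) * x 1)) *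
      ![(lam.1 : ℝ), (lam.2 : ℝ)] i * ![(lam.1 : ℝ), (lam.2 : ℝ)] j

/-- The matrix `X(x) = -(2/(E(1 - r_n(x)²))) D(x)ᵗD(x)`, where `E = 4π²n`. -/
def Xmat (n : ℤ) (x : EuclideanSpace ℝ (Fin 2)) : Matrix (Fin 2) (Fin 2) ℝ :=
  Matrix.of fun i j =>
    -(2 / (4 * π ^ 2 * (n : ℝ) * (1 - rn n x ^ 2))) * (Dn n x i * Dn n x j)

/-- The matrix `Y(x) = -(2/E)(H(x) + (r_n(x)/(1 - r_n(x)²)) D(x)ᵗD(x))`, where `E = 4π²n`. -/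
def Ymat (n : ℤ) (x : EuclideanSpace ℝ (Fin 2)) : Matrix (Fin 2) (Fin 2) ℝ :=
  Matrix.of fun i j =>
    -(2 / (4 * π ^ 2 * (n : ℝ))) *
      (Hn n x i j + (rn n x / (1 - rn n x ^ 2)) * (Dn n x i * Dn n x j))

/-
The quantities `r_n`, `D` and `H` are averages over `E_n` of `cos θ_λ`,
`-2π sin θ_λ λ_i` and `-4π² cos θ_λ λ_i λ_j`, where `θ_λ = 2π⟨λ,x⟩` and `λ_i² ≤ n`. Hence
`|H_ij| ≤ E`, and Cauchy–Schwarz together with `sin² = 1 - cos²` and `r² ≤ avg cos²` gives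
`D_i² ≤ 4π² n · avg sin² ≤ E(1 - r²)`. The factor `1 - r²` thus cancels the denominators of
`X` and `Y`, so that `|X_ij| ≤ 2` and `|Y_ij| ≤ 4`.
-/

open Finset Real
open scoped BigOperators

section Expect

variable {ι : Type*} {s : Finset ι}

lemma Finset.sq_expect_le_expect_sq (hs : s.Nonempty) (f : ι → ℝ) :
    (𝔼 i ∈ s, f i) ^ 2 ≤ 𝔼 i ∈ s, f i ^ 2 := by
  simpa [expect_const hs] using expect_mul_sq_le_sq_mul_sq s (fun _ => (1 : ℝ)) f

lemma Finset.abs_expect_le_of_abs_le (hs : s.Nonempty) {f : ι → ℝ} {M : ℝ}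
    (hf : ∀ i ∈ s, |f i| ≤ M) : |𝔼 i ∈ s, f i| ≤ M :=
  (abs_expect_le s f).trans (expect_le hs hf)

lemma Finset.sq_expect_sin_mul_le (hs : s.Nonempty) (θ : ι → ℝ) {a : ι → ℝ} {M : ℝ}
    (ha : ∀ i ∈ s, a i ^ 2 ≤ M) :
    (𝔼 i ∈ s, sin (θ i) * a i) ^ 2 ≤ M * (1 - (𝔼 i ∈ s, cos (θ i)) ^ 2) := by
  have hM : 0 ≤ M := by
    obtain ⟨i, hi⟩ := hs
    exact (sq_nonneg _).trans (ha i hi)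
  have hsin : 𝔼 i ∈ s, sin (θ i) ^ 2 = 1 - 𝔼 i ∈ s, cos (θ i) ^ 2 := by
    simp_rw [sin_sq]
    rw [expect_sub_distrib, expect_const hs]
  calc (𝔼 i ∈ s, sin (θ i) * a i) ^ 2
      ≤ (𝔼 i ∈ s, sin (θ i) ^ 2) * 𝔼 i ∈ s, a i ^ 2 := expect_mul_sq_le_sq_mul_sq s _ _
    _ ≤ (𝔼 i ∈ s, sin (θ i) ^ 2) * M := by
        gcongr
        exact expect_le hs ha
    _ = M * (1 - 𝔼 i ∈ s, cos (θ i) ^ 2) := by rw [hsin, mul_comm]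
    _ ≤ M * (1 - (𝔼 i ∈ s, cos (θ i)) ^ 2) := by
        gcongr
        exact sq_expect_le_expect_sq hs _

end Expect

lemma Set.Finite.inv_ncard_mul_finsum_mem_eq_expect {α : Type*} {s : Set α} (hs : s.Finite)
    (f : α → ℝ) : (s.ncard : ℝ)⁻¹ * ∑ᶠ a ∈ s, f a = 𝔼 a ∈ hs.toFinset, f a := by
  rw [expect_eq_sum_div_card, finsum_mem_eq_finite_toFinset_sum f hs,
    Set.ncard_eq_toFinset_card s hs, div_eq_inv_mul]

lemma abs_mul_le_of_sq_le {a b B : ℝ} (ha : a ^ 2 ≤ B) (hb : b ^ 2 ≤ B) : |a * b| ≤ B := by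
  rw [abs_mul]
  nlinarith [two_mul_le_add_sq |a| |b|, sq_abs a, sq_abs b]

lemma abs_div_mul_le {a c k p : ℝ} (hk : 0 ≤ k) (hp : |p| ≤ k * |c|) :
    |a / c * p| ≤ |a| * k := by
  rw [abs_mul, abs_div, div_mul_eq_mul_div, mul_div_assoc]
  gcongr
  exact div_le_of_le_mul₀ (abs_nonneg c) hk hp

lemma abs_add_div_mul_le {h r t p E : ℝ} (ht : 0 < t) (hh : |h| ≤ E) (hr : |r| ≤ 1)
    (hp : |p| ≤ E * t) : |h + r / t * p| ≤ 2 * E := by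
  have hE : 0 ≤ E := (abs_nonneg h).trans hh
  have hrp : |r / t * p| ≤ |r| * E := abs_div_mul_le hE (by rwa [abs_of_pos ht])
  calc |h + r / t * p| ≤ |h| + |r / t * p| := abs_add_le _ _
    _ ≤ E + 1 * E := by gcongr; exact hrp.trans (by gcongr)
    _ = 2 * E := by ring

section Lattice

lemma nonneg_of_mem_S {n : ℤ} (hn : n ∈ S) : 0 ≤ n := by
  obtain ⟨a, b, rfl⟩ := hn
  positivity

lemma En_nonempty_of_mem_S {n : ℤ} (hn : n ∈ S) : (En n).Nonempty := by
  obtain ⟨a, b, hab⟩ := hn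
  exact ⟨(a, b), hab.symm⟩

lemma En_finite (n : ℤ) : (En n).Finite := by
  refine (Set.finite_Icc (-n, -n) (n, n)).subset fun l (hl : l.1 ^ 2 + l.2 ^ 2 = n) => ?_
  refine ⟨⟨?_, ?_⟩, ?_, ?_⟩ <;> dsimp <;>
    nlinarith [sq_nonneg (l.1 + 1), sq_nonneg (l.2 + 1), sq_nonneg (l.1 - 1), sq_nonneg (l.2 - 1)]

def phase (x : EuclideanSpace ℝ (Fin 2)) (l : ℤ × ℤ) : ℝ :=
  2 * π * ((l.1 : ℝ) * x 0 + (l.2 : ℝ) * x 1)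

def latVec (l : ℤ × ℤ) : Fin 2 → ℝ := ![(l.1 : ℝ), (l.2 : ℝ)]

lemma latVec_sq_le {n : ℤ} {l : ℤ × ℤ} (hl : l ∈ En n) (i : Fin 2) : latVec l i ^ 2 ≤ n := by
  have h : (l.1 : ℝ) ^ 2 + (l.2 : ℝ) ^ 2 = n := by exact_mod_cast hl
  fin_cases i <;> simp [latVec] <;> nlinarith [sq_nonneg (l.1 : ℝ), sq_nonneg (l.2 : ℝ)]

variable (n : ℤ) (x : EuclideanSpace ℝ (Fin 2))

lemma rn_eq_expect : rn n x = 𝔼 l ∈ (En_finite n).toFinset, cos (phase x l) :=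
  (En_finite n).inv_ncard_mul_finsum_mem_eq_expect _

lemma Dn_eq_expect (i : Fin 2) :
    Dn n x i = -(2 * π) * 𝔼 l ∈ (En_finite n).toFinset, sin (phase x l) * latVec l i := by
  rw [Dn, mul_assoc]
  exact congrArg _ ((En_finite n).inv_ncard_mul_finsum_mem_eq_expect _)

lemma Hn_eq_expect (i j : Fin 2) :
    Hn n x i j = -(4 * π ^ 2) *
      𝔼 l ∈ (En_finite n).toFinset, cos (phase x l) * (latVec l i * latVec l j) := by
  simp_rw [← mul_assoc]
  rw [Hn, Matrix.of_apply, mul_assoc]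
  exact congrArg _ ((En_finite n).inv_ncard_mul_finsum_mem_eq_expect _)

variable {n}

lemma sq_rn_le_one (hn : n ∈ S) : rn n x ^ 2 ≤ 1 := by
  rw [sq_le_one_iff_abs_le_one, rn_eq_expect]
  exact abs_expect_le_of_abs_le ((En_finite n).toFinset_nonempty.2 (En_nonempty_of_mem_S hn))
    fun l _ => abs_cos_le_one _

lemma sq_Dn_le (hn : n ∈ S) (i : Fin 2) :
    Dn n x i ^ 2 ≤ 4 * π ^ 2 * n * (1 - rn n x ^ 2) := by
  have hF := (En_finite n).toFinset_nonempty.2 (En_nonempty_of_mem_S hn)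
  have h := sq_expect_sin_mul_le hF (phase x)
    fun l hl => latVec_sq_le ((En_finite n).mem_toFinset.1 hl) i
  rw [Dn_eq_expect, rn_eq_expect]
  calc (-(2 * π) * _) ^ 2 = 4 * π ^ 2 * (𝔼 l ∈ _, sin (phase x l) * latVec l i) ^ 2 := by ring
    _ ≤ 4 * π ^ 2 * (n * (1 - (𝔼 l ∈ _, cos (phase x l)) ^ 2)) := by gcongr
    _ = _ := by ring

lemma abs_Hn_le (hn : n ∈ S) (i j : Fin 2) : |Hn n x i j| ≤ 4 * π ^ 2 * n := by
  have hF := (En_finite n).toFinset_nonempty.2 (En_nonempty_of_mem_S hn)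
  have h : |𝔼 l ∈ (En_finite n).toFinset, cos (phase x l) * (latVec l i * latVec l j)| ≤ n := by
    refine abs_expect_le_of_abs_le hF fun l hl => ?_
    have hl := (En_finite n).mem_toFinset.1 hl
    rw [abs_mul, ← one_mul (n : ℝ)]
    exact mul_le_mul (abs_cos_le_one _)
      (abs_mul_le_of_sq_le (latVec_sq_le hl i) (latVec_sq_le hl j)) (abs_nonneg _) zero_le_one
  rw [Hn_eq_expect, abs_mul, abs_neg, abs_of_pos (by positivity)]
  gcongr

end Lattice

theorem X_Y_entries_uniformly_bounded :
    ∃ C : ℝ, 0 < C ∧ ∀ n : ℤ, n ∈ S → ∀ x : EuclideanSpace ℝ (Fin 2),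
      rn n x ^ 2 ≠ 1 → ∀ i j : Fin 2, |Xmat n x i j| ≤ C ∧ |Ymat n x i j| ≤ C := by
  refine ⟨4, by norm_num, fun n hn x hr i j => ?_⟩
  have ht : 0 < 1 - rn n x ^ 2 := sub_pos.2 ((sq_rn_le_one x hn).lt_of_ne hr)
  have hE : 0 ≤ 4 * π ^ 2 * (n : ℝ) := by have := nonneg_of_mem_S hn; positivity
  have hDD : |Dn n x i * Dn n x j| ≤ 4 * π ^ 2 * n * (1 - rn n x ^ 2) :=
    abs_mul_le_of_sq_le (sq_Dn_le x hn i) (sq_Dn_le x hn j)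
  have hr1 : |rn n x| ≤ 1 := sq_le_one_iff_abs_le_one _ |>.1 (sq_rn_le_one x hn)
  constructor
  · calc |Xmat n x i j| ≤ |2| * 1 := by
          rw [Xmat, Matrix.of_apply, neg_mul, abs_neg]
          exact abs_div_mul_le zero_le_one (by rwa [one_mul, abs_of_nonneg (mul_nonneg hE ht.le)])
      _ ≤ 4 := by norm_num
  · calc |Ymat n x i j| ≤ |2| * 2 := by
          rw [Ymat, Matrix.of_apply, neg_mul, abs_neg]
          refine abs_div_mul_le zero_le_two ?_
          rw [abs_of_nonneg hE]
          exact abs_add_div_mul_le ht (abs_Hn_le x hn i j) hr1 hDD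
      _ ≤ 4 := by norm_num
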